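/- arXiv:1804.00420 — 3 statements merged into one kernel-verified Lean document; each statement's English description precedes it below -/
import Mathlib

section
/- Let K, M be positive integers with K ≤ M, let G ∈ ℂ^{K×M} be such that G Gᴴ is invertible, and let δ_1, …, δ_K be positive reals with Δ = diag(δ_1, …, δ_K). Let F = Δ^{1/2} G be the falsely reported channel matrix. Then F Fᴴ is invertible, and the k-th column of the pseudoinverse W_F = Fᴴ (F Fᴴ)⁻¹ equals δ_k^{-1/2} w_k, where w_k is the k-th column of W = Gᴴ (G Gᴴ)⁻¹. Consequently the effective channel gains computed from the false CSI satisfy d̄_k² := 1/‖(W_F)_k‖² = δ_k · d_k², where d_k² = 1/‖w_k‖². -/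
open Matrix

/-- The falsely reported channel matrix `F = Δ^{1/2} G`, where `Δ = diag (δ₁, …, δ_K)`. -/
noncomputable def falseCSI {K M : ℕ} (δ : Fin K → ℝ) (G : Matrix (Fin K) (Fin M) ℂ) :
    Matrix (Fin K) (Fin M) ℂ :=
  Matrix.diagonal (fun k => (Real.sqrt (δ k) : ℂ)) * G

/-- With `F = Δ^{1/2} G` (misreporting ratios `δ_k > 0`), `F Fᴴ` is
invertible, the `k`-th column of `W_F = Fᴴ (F Fᴴ)⁻¹` equals `δ_k^{-1/2}` times the `k`-th
column of `W = Gᴴ (G Gᴴ)⁻¹`, and hence the effective channel gains computed from the false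
CSI satisfy `d̄_k² = 1/‖(W_F)_k‖² = δ_k · d_k²` where `d_k² = 1/‖w_k‖²`. -/
theorem falseCSI_precoder_column (K M : ℕ) (hK : 0 < K) (hM : 0 < M) (hKM : K ≤ M)
    (G : Matrix (Fin K) (Fin M) ℂ) (hG : IsUnit (G * Gᴴ).det)
    (δ : Fin K → ℝ) (hδ : ∀ k, 0 < δ k) :
    IsUnit ((falseCSI δ G) * (falseCSI δ G)ᴴ).det ∧
    (∀ (k : Fin K) (i : Fin M),
      ((falseCSI δ G)ᴴ * ((falseCSI δ G) * (falseCSI δ G)ᴴ)⁻¹) i k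
        = ((Real.sqrt (δ k) : ℂ))⁻¹ * (Gᴴ * (G * Gᴴ)⁻¹) i k) ∧
    (∀ k : Fin K,
      1 / (∑ i : Fin M, ‖((falseCSI δ G)ᴴ * ((falseCSI δ G) * (falseCSI δ G)ᴴ)⁻¹) i k‖ ^ 2)
        = δ k * (1 / (∑ i : Fin M, ‖(Gᴴ * (G * Gᴴ)⁻¹) i k‖ ^ 2))) := by
  set c : Fin K → ℂ := fun k => (Real.sqrt (δ k) : ℂ) with hc
  have hcne : ∀ k, c k ≠ 0 := by
    intro k
    simp only [hc, ne_eq, Complex.ofReal_eq_zero]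
    exact (Real.sqrt_pos.mpr (hδ k)).ne'
  set D : Matrix (Fin K) (Fin K) ℂ := Matrix.diagonal c with hD
  have hDH : Dᴴ = D := by
    rw [hD, Matrix.diagonal_conjTranspose]
    exact congrArg Matrix.diagonal (funext fun k => Complex.conj_ofReal _)
  have hF : falseCSI δ G = D * G := rfl
  have hFF : (falseCSI δ G) * (falseCSI δ G)ᴴ = D * (G * Gᴴ) * D := by
    rw [hF, Matrix.conjTranspose_mul, hDH]
    simp [Matrix.mul_assoc]
  have hdetD : IsUnit D.det := by
    rw [hD, Matrix.det_diagonal]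
    exact isUnit_iff_ne_zero.mpr (Finset.prod_ne_zero_iff.mpr fun k _ => hcne k)
  have hdet : IsUnit ((falseCSI δ G) * (falseCSI δ G)ᴴ).det := by
    rw [hFF, Matrix.det_mul, Matrix.det_mul]
    exact (hdetD.mul hG).mul hdetD
  have hDinv : D⁻¹ = Matrix.diagonal fun k => (c k)⁻¹ := by
    refine Matrix.inv_eq_right_inv ?_
    rw [hD, Matrix.diagonal_mul_diagonal, ← Matrix.diagonal_one]
    exact congrArg Matrix.diagonal (funext fun k => mul_inv_cancel₀ (hcne k))
  have hDD : D * D⁻¹ = 1 := Matrix.mul_nonsing_inv D hdetD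
  have hW : (falseCSI δ G)ᴴ * ((falseCSI δ G) * (falseCSI δ G)ᴴ)⁻¹
      = (Gᴴ * (G * Gᴴ)⁻¹) * D⁻¹ := by
    rw [hFF, hF, Matrix.conjTranspose_mul, hDH, Matrix.mul_inv_rev, Matrix.mul_inv_rev]
    calc Gᴴ * D * (D⁻¹ * ((G * Gᴴ)⁻¹ * D⁻¹))
        = Gᴴ * (D * D⁻¹) * ((G * Gᴴ)⁻¹ * D⁻¹) := by simp [Matrix.mul_assoc]
      _ = Gᴴ * (G * Gᴴ)⁻¹ * D⁻¹ := by rw [hDD, Matrix.mul_one, Matrix.mul_assoc]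
  have hcol : ∀ (k : Fin K) (i : Fin M),
      ((falseCSI δ G)ᴴ * ((falseCSI δ G) * (falseCSI δ G)ᴴ)⁻¹) i k
        = ((Real.sqrt (δ k) : ℂ))⁻¹ * (Gᴴ * (G * Gᴴ)⁻¹) i k := by
    intro k i
    rw [hW, hDinv, Matrix.mul_diagonal]
    ring
  refine ⟨hdet, hcol, ?_⟩
  intro k
  have hsum : (∑ i : Fin M, ‖((falseCSI δ G)ᴴ * ((falseCSI δ G) * (falseCSI δ G)ᴴ)⁻¹) i k‖ ^ 2)
      = (δ k)⁻¹ * ∑ i : Fin M, ‖(Gᴴ * (G * Gᴴ)⁻¹) i k‖ ^ 2 := by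
    rw [Finset.mul_sum]
    refine Finset.sum_congr rfl fun i _ => ?_
    rw [hcol k i, norm_mul, mul_pow, norm_inv, Complex.norm_real,
      Real.norm_eq_abs, abs_of_nonneg (Real.sqrt_nonneg _), inv_pow,
      Real.sq_sqrt (hδ k).le]
  rw [hsum]
  rcases eq_or_ne (∑ i : Fin M, ‖(Gᴴ * (G * Gᴴ)⁻¹) i k‖ ^ 2) 0 with h | h
  · rw [h]; simp
  · field_simp
end

section
/- Let K, M be positive integers with K ≤ M, let G ∈ ℂ^{K×M} be such that G Gᴴ is invertible, let δ_1, …, δ_K be positive reals, Δ = diag(δ_1, …, δ_K), and F = Δ^{1/2} G. Then G · Fᴴ (F Fᴴ)⁻¹ = Δ^{-1/2} (as K×K matrices). In particular, when the base station applies zero-forcing precoding computed from the false channel matrix F, the matrix of signals actually received over the true channel G satisfies G Fᴴ(F Fᴴ)⁻¹ D̄ = Δ^{-1/2} D̄ = D, where D̄ = diag(d̄_1, …, d̄_K) with d̄_k = 1/‖(Fᴴ(F Fᴴ)⁻¹)_k‖ and D = diag(d_1, …, d_K) with d_k = 1/‖(Gᴴ(G Gᴴ)⁻¹)_k‖; that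 is, misreporting channel magnitudes does not change the users' true effective channel gains. -/
open Matrix

/-- With `F = Δ^{1/2} G`, we have `G Fᴴ (F Fᴴ)⁻¹ = Δ^{-1/2}`.
In particular, with `D̄ = diag(d̄_k)`, `d̄_k = 1/‖(Fᴴ(F Fᴴ)⁻¹)_k‖`, and `D = diag(d_k)`,
`d_k = 1/‖(Gᴴ(G Gᴴ)⁻¹)_k‖`, the matrix of actually received signals satisfies
`G Fᴴ(F Fᴴ)⁻¹ D̄ = Δ^{-1/2} D̄ = D`: misreporting channel magnitudes does not change the
users' true effective channel gains. -/
theorem misreport_does_not_change_true_gains (K M : ℕ) (hK : 0 < K) (hM : 0 < M)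
    (hKM : K ≤ M) (G : Matrix (Fin K) (Fin M) ℂ) (hG : IsUnit (G * Gᴴ).det)
    (δ : Fin K → ℝ) (hδ : ∀ k, 0 < δ k) :
    G * ((falseCSI δ G)ᴴ * ((falseCSI δ G) * (falseCSI δ G)ᴴ)⁻¹)
        = Matrix.diagonal (fun k => ((Real.sqrt (δ k) : ℂ))⁻¹) ∧
    Matrix.diagonal (fun k => ((Real.sqrt (δ k) : ℂ))⁻¹) *
        Matrix.diagonal (fun k => ((1 / Real.sqrt (∑ i : Fin M,
          ‖((falseCSI δ G)ᴴ * ((falseCSI δ G) * (falseCSI δ G)ᴴ)⁻¹) i k‖ ^ 2) : ℝ) : ℂ))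
      = Matrix.diagonal (fun k => ((1 / Real.sqrt (∑ i : Fin M,
          ‖(Gᴴ * (G * Gᴴ)⁻¹) i k‖ ^ 2) : ℝ) : ℂ)) ∧
    G * ((falseCSI δ G)ᴴ * ((falseCSI δ G) * (falseCSI δ G)ᴴ)⁻¹) *
        Matrix.diagonal (fun k => ((1 / Real.sqrt (∑ i : Fin M,
          ‖((falseCSI δ G)ᴴ * ((falseCSI δ G) * (falseCSI δ G)ᴴ)⁻¹) i k‖ ^ 2) : ℝ) : ℂ))
      = Matrix.diagonal (fun k => ((1 / Real.sqrt (∑ i : Fin M,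
          ‖(Gᴴ * (G * Gᴴ)⁻¹) i k‖ ^ 2) : ℝ) : ℂ)) := by
  set S : Matrix (Fin K) (Fin K) ℂ := Matrix.diagonal (fun k => (Real.sqrt (δ k) : ℂ)) with hSdef
  have hne : ∀ k, (Real.sqrt (δ k) : ℂ) ≠ 0 := fun k => by
    exact_mod_cast (Real.sqrt_pos.2 (hδ k)).ne'
  have hSdet : IsUnit S.det := by
    rw [hSdef, Matrix.det_diagonal]
    exact isUnit_iff_ne_zero.2 (Finset.prod_ne_zero_iff.2 fun k _ => hne k)
  have hSH : Sᴴ = S := by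
    rw [hSdef, Matrix.diagonal_conjTranspose]
    ext i j
    by_cases h : i = j <;> simp [Matrix.diagonal_apply, h]
  have hSinv : S⁻¹ = Matrix.diagonal (fun k => ((Real.sqrt (δ k) : ℂ))⁻¹) := by
    apply Matrix.inv_eq_right_inv
    rw [hSdef, Matrix.diagonal_mul_diagonal]
    rw [← Matrix.diagonal_one]
    ext i j
    by_cases h : i = j <;>
      simp [Matrix.diagonal_apply, h, mul_inv_cancel₀ (hne j)]
  have hFdef : falseCSI δ G = S * G := rfl
  have hFH : (S * G)ᴴ = Gᴴ * S := by rw [Matrix.conjTranspose_mul, hSH]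
  have hFF : (S * G) * (S * G)ᴴ = S * (G * Gᴴ) * S := by
    rw [hFH]; simp only [Matrix.mul_assoc]
  -- the precoder computed from the false CSI
  have hW : (falseCSI δ G)ᴴ * ((falseCSI δ G) * (falseCSI δ G)ᴴ)⁻¹
      = Gᴴ * (G * Gᴴ)⁻¹ * Matrix.diagonal (fun k => ((Real.sqrt (δ k) : ℂ))⁻¹) := by
    rw [hFdef, hFF, hFH, Matrix.mul_inv_rev, Matrix.mul_inv_rev, ← hSinv]
    simp only [Matrix.mul_assoc]
    rw [← Matrix.mul_assoc S S⁻¹, Matrix.mul_nonsing_inv _ hSdet, Matrix.one_mul]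
  -- Part 1
  have h1 : G * ((falseCSI δ G)ᴴ * ((falseCSI δ G) * (falseCSI δ G)ᴴ)⁻¹)
      = Matrix.diagonal (fun k => ((Real.sqrt (δ k) : ℂ))⁻¹) := by
    rw [hW, ← hSinv, ← Matrix.mul_assoc, ← Matrix.mul_assoc, Matrix.mul_nonsing_inv _ hG,
      Matrix.one_mul]
  -- column norms of the false precoder
  have hsum : ∀ k, (∑ i : Fin M,
      ‖((falseCSI δ G)ᴴ * ((falseCSI δ G) * (falseCSI δ G)ᴴ)⁻¹) i k‖ ^ 2)
      = (∑ i : Fin M, ‖(Gᴴ * (G * Gᴴ)⁻¹) i k‖ ^ 2) * ((Real.sqrt (δ k))⁻¹) ^ 2 := by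
    intro k
    rw [Finset.sum_mul]
    refine Finset.sum_congr rfl fun i _ => ?_
    rw [hW, Matrix.mul_diagonal]
    rw [norm_mul, mul_pow]
    congr 1
    rw [← Complex.ofReal_inv, Complex.norm_real, Real.norm_eq_abs,
      abs_of_nonneg (by positivity)]
  -- Part 2
  have h2 : Matrix.diagonal (fun k => ((Real.sqrt (δ k) : ℂ))⁻¹) *
        Matrix.diagonal (fun k => ((1 / Real.sqrt (∑ i : Fin M,
          ‖((falseCSI δ G)ᴴ * ((falseCSI δ G) * (falseCSI δ G)ᴴ)⁻¹) i k‖ ^ 2) : ℝ) : ℂ))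
      = Matrix.diagonal (fun k => ((1 / Real.sqrt (∑ i : Fin M,
          ‖(Gᴴ * (G * Gᴴ)⁻¹) i k‖ ^ 2) : ℝ) : ℂ)) := by
    rw [Matrix.diagonal_mul_diagonal]
    ext i j
    by_cases h : i = j
    · subst h
      rw [Matrix.diagonal_apply_eq, Matrix.diagonal_apply_eq, hsum i]
      set s : ℝ := ∑ m : Fin M, ‖(Gᴴ * (G * Gᴴ)⁻¹) m i‖ ^ 2 with hsdef
      have hs0 : 0 ≤ s := by positivity
      set a : ℝ := (Real.sqrt (δ i))⁻¹ with hadef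
      have ha0 : 0 ≤ a := by positivity
      have hane : a ≠ 0 := by
        rw [hadef]
        exact inv_ne_zero (Real.sqrt_ne_zero'.2 (hδ i))
      have hsqrt : Real.sqrt (s * a ^ 2) = Real.sqrt s * a := by
        rw [Real.sqrt_mul hs0, Real.sqrt_sq ha0]
      rw [hsqrt, ← Complex.ofReal_inv, ← Complex.ofReal_mul]
      congr 1
      rw [one_div, one_div, mul_inv, mul_comm ((Real.sqrt s)⁻¹) (a⁻¹),
        ← mul_assoc, mul_inv_cancel₀ hane, one_mul]
    · rw [Matrix.diagonal_apply_ne _ h, Matrix.diagonal_apply_ne _ h]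
  exact ⟨h1, h2, by rw [h1]; exact h2⟩
end

section
/- Let 0 < a < b be reals. Then the function c ↦ log(1 + a c) / log(1 + b c) is strictly increasing on (0, ∞). Consequently, for fixed integers 0 < K_M ≤ K < M and fixed δ ∈ (0,1), β > 0, σ² > 0, the rate loss θ(K_M|K) = 1 − log₂(1 + (Pβ/σ²)(M−K)/(K − K_M + K_M/δ)) / log₂(1 + (Pβ/σ²)(M−K)/K) is strictly decreasing in the transmit power P on (0, ∞). -/
open Real Set

lemma psi_strictMono : StrictMonoOn (fun t : ℝ => t * Real.log t / (t - 1)) (Set.Ioi 1) := by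
  apply strictMonoOn_of_deriv_pos (convex_Ioi 1)
  · intro t ht
    have ht1 : (1:ℝ) < t := ht
    have h0 : t ≠ 0 := by linarith
    apply ContinuousWithinAt.div
    · exact (continuousAt_id.mul (Real.continuousAt_log h0)).continuousWithinAt
    · exact ((continuousAt_id.sub continuousAt_const)).continuousWithinAt
    · intro h; nlinarith
  · intro t ht
    rw [interior_Ioi] at ht
    have ht1 : (1:ℝ) < t := ht
    have h0 : t ≠ 0 := by linarith
    have h1 : t - 1 ≠ 0 := by intro h; nlinarith
    have hnum : HasDerivAt (fun t : ℝ => t * Real.log t) (1 * Real.log t + t * t⁻¹) t :=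
      (hasDerivAt_id t).mul (Real.hasDerivAt_log h0)
    have hden : HasDerivAt (fun t : ℝ => t - 1) 1 t := by
      simpa using (hasDerivAt_id t).sub_const 1
    have hd : HasDerivAt (fun t : ℝ => t * Real.log t / (t - 1))
        (((1 * Real.log t + t * t⁻¹) * (t - 1) - t * Real.log t * 1) / (t - 1) ^ 2) t :=
      hnum.div hden h1
    rw [hd.deriv]
    have hlog : Real.log t < t - 1 := by
      have := Real.log_lt_sub_one_of_pos (by linarith : (0:ℝ) < t) (by linarith)
      linarith
    have : t * t⁻¹ = 1 := mul_inv_cancel₀ h0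
    rw [this]
    have hsq : (0:ℝ) < (t - 1) ^ 2 := by positivity
    apply div_pos _ hsq
    nlinarith

lemma ratio_strictMono (a b : ℝ) (ha : 0 < a) (hab : a < b) :
    StrictMonoOn (fun c : ℝ => Real.log (1 + a * c) / Real.log (1 + b * c))
      (Set.Ioi (0 : ℝ)) := by
  have hb : 0 < b := ha.trans hab
  apply strictMonoOn_of_deriv_pos (convex_Ioi 0)
  · intro c hc
    have hc0 : (0:ℝ) < c := hc
    have hu : (1:ℝ) < 1 + a * c := by nlinarith
    have hv : (1:ℝ) < 1 + b * c := by nlinarith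
    apply ContinuousWithinAt.div
    · exact ((Real.continuousAt_log (by linarith)).comp
        (by fun_prop : ContinuousAt (fun c : ℝ => 1 + a * c) c)).continuousWithinAt
    · exact ((Real.continuousAt_log (by linarith)).comp
        (by fun_prop : ContinuousAt (fun c : ℝ => 1 + b * c) c)).continuousWithinAt
    · have := Real.log_pos hv
      intro h; rw [h] at this; exact lt_irrefl _ this
  · intro c hc
    rw [interior_Ioi] at hc
    have hc0 : (0:ℝ) < c := hc
    set u : ℝ := 1 + a * c with hu_def
    set v : ℝ := 1 + b * c with hv_def
    have hu : (1:ℝ) < u := by simp only [hu_def]; nlinarith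
    have hv : (1:ℝ) < v := by simp only [hv_def]; nlinarith
    have hu0 : (0:ℝ) < u := by linarith
    have hv0 : (0:ℝ) < v := by linarith
    have hLu : 0 < Real.log u := Real.log_pos hu
    have hLv : 0 < Real.log v := Real.log_pos hv
    have h1 : HasDerivAt (fun c : ℝ => 1 + a * c) a c := by
      simpa using ((hasDerivAt_id c).const_mul a).const_add 1
    have h2 : HasDerivAt (fun c : ℝ => 1 + b * c) b c := by
      simpa using ((hasDerivAt_id c).const_mul b).const_add 1
    have hla : HasDerivAt (fun c : ℝ => Real.log (1 + a * c)) (a / u) c :=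
      h1.log (by positivity)
    have hlb : HasDerivAt (fun c : ℝ => Real.log (1 + b * c)) (b / v) c :=
      h2.log (by positivity)
    have hd : HasDerivAt (fun c : ℝ => Real.log (1 + a * c) / Real.log (1 + b * c))
        ((a / u * Real.log v - Real.log u * (b / v)) / (Real.log v) ^ 2) c :=
      hla.div hlb (ne_of_gt hLv)
    rw [hd.deriv]
    apply div_pos _ (by positivity)
    -- key inequality from psi monotonicity
    have hpsi : u * Real.log u / (u - 1) < v * Real.log v / (v - 1) := by
      have huv : u < v := by simp only [hu_def, hv_def]; nlinarith
      exact psi_strictMono hu (lt_trans hu huv) huv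
    have hu1 : (0:ℝ) < u - 1 := by linarith
    have hv1 : (0:ℝ) < v - 1 := by linarith
    rw [div_lt_div_iff₀ hu1 hv1] at hpsi
    -- hpsi : u * log u * (v - 1) < v * log v * (u - 1)
    have hac : u - 1 = a * c := by simp [hu_def]
    have hbc : v - 1 = b * c := by simp [hv_def]
    rw [hac, hbc] at hpsi
    rw [sub_pos, div_mul_eq_mul_div, mul_div_assoc, mul_div_assoc', mul_div_assoc',
      div_lt_div_iff₀ hv0 hu0]
    nlinarith [hpsi, hc0]


/-- For `0 < a < b`, the function `c ↦ log(1 + ac)/log(1 + bc)` is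
strictly increasing on `(0, ∞)`. Consequently, for fixed integers `0 < K_M ≤ K < M`,
`δ ∈ (0,1)`, `β > 0`, `σ² > 0`, the rate loss
`θ(K_M|K)(P) = 1 − log₂(1 + (Pβ/σ²)(M−K)/(K − K_M + K_M/δ)) / log₂(1 + (Pβ/σ²)(M−K)/K)`
is strictly decreasing in the transmit power `P` on `(0, ∞)`. -/
theorem log_ratio_strictMono_and_rateLoss_strictAnti :
    (∀ a b : ℝ, 0 < a → a < b →
      StrictMonoOn (fun c : ℝ => Real.log (1 + a * c) / Real.log (1 + b * c))
        (Set.Ioi (0 : ℝ))) ∧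
    (∀ (K_M K M : ℕ) (δ β σ2 : ℝ), 0 < K_M → K_M ≤ K → K < M →
      0 < δ → δ < 1 → 0 < β → 0 < σ2 →
      StrictAntiOn (fun P : ℝ =>
          1 - Real.logb 2 (1 + (P * β / σ2) * ((M : ℝ) - K) /
                ((K : ℝ) - K_M + (K_M : ℝ) / δ)) /
              Real.logb 2 (1 + (P * β / σ2) * ((M : ℝ) - K) / (K : ℝ)))
        (Set.Ioi (0 : ℝ))) := by
  constructor
  · exact fun a b ha hab => ratio_strictMono a b ha hab
  · intro K_M K M δ β σ2 hKM hKMK hKM' hδ hδ1 hβ hσ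
    have hKMpos : (0:ℝ) < (K_M : ℝ) := by exact_mod_cast hKM
    have hKKM : (K_M : ℝ) ≤ (K : ℝ) := by exact_mod_cast hKMK
    have hMK : (K : ℝ) < (M : ℝ) := by exact_mod_cast hKM'
    have hKpos : (0:ℝ) < (K : ℝ) := lt_of_lt_of_le hKMpos hKKM
    -- denominators
    set D : ℝ := (K : ℝ) - K_M + (K_M : ℝ) / δ with hD
    have hDK : (K : ℝ) < D := by
      have : (K_M : ℝ) < (K_M : ℝ) / δ := by
        rw [lt_div_iff₀ hδ]; nlinarith
      simp only [hD]; linarith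
    have hDpos : (0:ℝ) < D := hKpos.trans hDK
    set a : ℝ := β / σ2 * ((M : ℝ) - K) / D with ha_def
    set b : ℝ := β / σ2 * ((M : ℝ) - K) / (K : ℝ) with hb_def
    have hnum : 0 < β / σ2 * ((M : ℝ) - K) := by
      apply mul_pos (div_pos hβ hσ); linarith
    have ha : 0 < a := div_pos hnum hDpos
    have hab : a < b := by
      simp only [ha_def, hb_def]
      exact div_lt_div_of_pos_left hnum hKpos hDK
    have hmono := ratio_strictMono a b ha hab
    intro x hx y hy hxy
    have key : ∀ P : ℝ,
        Real.logb 2 (1 + (P * β / σ2) * ((M : ℝ) - K) / D) /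
          Real.logb 2 (1 + (P * β / σ2) * ((M : ℝ) - K) / (K : ℝ))
        = Real.log (1 + a * P) / Real.log (1 + b * P) := by
      intro P
      have e1 : 1 + (P * β / σ2) * ((M : ℝ) - K) / D = 1 + a * P := by
        simp only [ha_def]; field_simp
      have e2 : 1 + (P * β / σ2) * ((M : ℝ) - K) / (K : ℝ) = 1 + b * P := by
        simp only [hb_def]; field_simp
      rw [e1, e2, Real.logb, Real.logb,
        div_div_div_cancel_right₀ (ne_of_gt (Real.log_pos one_lt_two))]
    simp only [key]
    have := hmono hx hy hxy
    linarith
end
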